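/- Let n ≥ 2 and x ∈ [0,1]. Then the operator B_n^{M,2} satisfies: (i) B_n^{M,2}(e_0;x) = 1, (ii) B_n^{M,2}(e_1;x) = x, (iii) B_n^{M,2}(e_2;x) = x² + 2x(1−x)/n², where e_j(t) = t^j. -/

import Mathlib

open scoped BigOperators
open Set Filter MeasureTheory

/-- Bernstein fundamental function `p_{n,k}` (vanishes for `k > n` since `choose = 0`). -/
noncomputable def bp (n k : ℕ) (x : ℝ) : ℝ :=
  (n.choose k : ℝ) * x ^ k * (1 - x) ^ (n - k)

/-- Bernstein fundamental function with integer index, vanishing for negative `k`. -/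
noncomputable def bpz (n : ℕ) (k : ℤ) (x : ℝ) : ℝ :=
  if 0 ≤ k then bp n k.toNat x else 0

/-- The classical Bernstein operator `B_n`. -/
noncomputable def Bern (n : ℕ) (f : ℝ → ℝ) (x : ℝ) : ℝ :=
  ∑ k ∈ Finset.range (n + 1), bp n k x * f (k / n)

/-- Modified fundamental function `p_{n,k}^{M,1}` with `a(x,n) = a1*x + a0`. -/
noncomputable def bpM1 (a0 a1 : ℝ) (n k : ℕ) (x : ℝ) : ℝ :=
  (a1 * x + a0) * bp (n - 1) k x + (a1 * (1 - x) + a0) * bpz (n - 1) ((k : ℤ) - 1) x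

/-- The modified Bernstein operator `B_n^{M,1}`. -/
noncomputable def BernM1 (a0 a1 : ℝ) (n : ℕ) (f : ℝ → ℝ) (x : ℝ) : ℝ :=
  ∑ k ∈ Finset.range (n + 1), bpM1 a0 a1 n k x * f (k / n)

/-- Second modified fundamental function `p_{n,k}^{M,2}`. -/
noncomputable def bpM2 (n k : ℕ) (x : ℝ) : ℝ :=
  ((n : ℝ) / 2 * x ^ 2 + (-1 - (n : ℝ) / 2) * x + 1) * bp (n - 2) k x
    + (n : ℝ) * x * (1 - x) * bpz (n - 2) ((k : ℤ) - 1) x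
    + ((n : ℝ) / 2 * x ^ 2 + (-(n : ℝ) / 2 + 1) * x) * bpz (n - 2) ((k : ℤ) - 2) x

/-- The second modified Bernstein operator `B_n^{M,2}`. -/
noncomputable def BernM2 (n : ℕ) (f : ℝ → ℝ) (x : ℝ) : ℝ :=
  ∑ k ∈ Finset.range (n + 1), bpM2 n k x * f (k / n)

/-- The Kantorovich operator `K_n`. -/
noncomputable def Kan (n : ℕ) (f : ℝ → ℝ) (x : ℝ) : ℝ :=
  ((n : ℝ) + 1) * ∑ k ∈ Finset.range (n + 1),
    bp n k x * ∫ t in ((k : ℝ) / (n + 1))..(((k : ℝ) + 1) / (n + 1)), f t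

/-- The modified Kantorovich operator `K_n^{M,1}`. -/
noncomputable def KanM1 (a0 a1 : ℝ) (n : ℕ) (f : ℝ → ℝ) (x : ℝ) : ℝ :=
  ((n : ℝ) + 1) * ∑ k ∈ Finset.range (n + 1),
    bpM1 a0 a1 n k x * ∫ t in ((k : ℝ) / (n + 1))..(((k : ℝ) + 1) / (n + 1)), f t

/-- The Durrmeyer operator `D_n`. -/
noncomputable def Dur (n : ℕ) (f : ℝ → ℝ) (x : ℝ) : ℝ :=
  ((n : ℝ) + 1) * ∑ k ∈ Finset.range (n + 1),
    bp n k x * ∫ t in (0:ℝ)..1, bp n k t * f t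

/-- The modified Durrmeyer operator `D_n^{M,1}`. -/
noncomputable def DurM1 (a0 a1 : ℝ) (n : ℕ) (f : ℝ → ℝ) (x : ℝ) : ℝ :=
  ((n : ℝ) + 1) * ∑ k ∈ Finset.range (n + 1),
    bpM1 a0 a1 n k x * ∫ t in (0:ℝ)..1, bp n k t * f t

/-- The genuine Bernstein–Durrmeyer operator `U_n`. -/
noncomputable def Gen (n : ℕ) (f : ℝ → ℝ) (x : ℝ) : ℝ :=
  (1 - x) ^ n * f 0 + x ^ n * f 1 +
    ((n : ℝ) - 1) * ∑ k ∈ Finset.Icc 1 (n - 1),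
      bp n k x * ∫ t in (0:ℝ)..1, bp (n - 2) (k - 1) t * f t

/-- The modified genuine Bernstein–Durrmeyer operator `U_n^{M,1}`. -/
noncomputable def GenM1 (a0 a1 : ℝ) (n : ℕ) (f : ℝ → ℝ) (x : ℝ) : ℝ :=
  (a1 * x + a0) * (1 - x) ^ (n - 1) * f 0 + (a1 * (1 - x) + a0) * x ^ (n - 1) * f 1 +
    ((n : ℝ) - 1) * ∑ k ∈ Finset.Icc 1 (n - 1),
      bpM1 a0 a1 n k x * ∫ t in (0:ℝ)..1, bp (n - 2) (k - 1) t * f t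

/-- First modulus of continuity on `[0,1]`. -/
noncomputable def omega1 (f : ℝ → ℝ) (δ : ℝ) : ℝ :=
  sSup {y | ∃ s t : ℝ, s ∈ Icc (0:ℝ) 1 ∧ t ∈ Icc (0:ℝ) 1 ∧ |s - t| ≤ δ ∧ y = |f s - f t|}

/-- Second modulus of smoothness on `[0,1]`. -/
noncomputable def omega2 (f : ℝ → ℝ) (δ : ℝ) : ℝ :=
  sSup {y | ∃ t h : ℝ, 0 < h ∧ h ≤ δ ∧ t - h ∈ Icc (0:ℝ) 1 ∧ t + h ∈ Icc (0:ℝ) 1 ∧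
    y = |f (t + h) - 2 * f t + f (t - h)|}

/-- Sup norm on `[0,1]`. -/
noncomputable def supNorm (g : ℝ → ℝ) : ℝ :=
  sSup {y | ∃ t ∈ Icc (0:ℝ) 1, y = |g t|}

/-! The three terms of `p_{n,k}^{M,2}` are Bernstein basis functions of degree `n - 2` shifted by
`0, 1, 2`. Re-indexing turns `B_n^{M,2} f` into a Bernstein sum of degree `n - 2` whose coefficient
at `j` combines `f (j/n)`, `f ((j+1)/n)` and `f ((j+2)/n)`; for `f = e_0, e_1, e_2` that coefficient
is a quadratic polynomial in `j`, so the moments follow from the first three factorial moments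
`∑ bp m j = 1`, `∑ j bp m j = m x`, `∑ j (j-1) bp m j = m (m-1) x²` of the Bernstein basis. -/

open Finset

section BernsteinMoments

variable (m : ℕ) (x : ℝ)

lemma bp_eq_eval_bernsteinPolynomial (k : ℕ) :
    bp m k x = (bernsteinPolynomial ℝ m k).eval x := by
  simp [bernsteinPolynomial, bp]

lemma sum_bp : ∑ k ∈ range (m + 1), bp m k x = 1 := by
  simpa [Polynomial.eval_finsetSum, ← bp_eq_eval_bernsteinPolynomial] using
    congrArg (Polynomial.eval x) (bernsteinPolynomial.sum ℝ m)

lemma sum_natCast_mul_bp : ∑ k ∈ range (m + 1), (k : ℝ) * bp m k x = m * x := by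
  simpa [Polynomial.eval_finsetSum, ← bp_eq_eval_bernsteinPolynomial] using
    congrArg (Polynomial.eval x) (bernsteinPolynomial.sum_smul ℝ m)

lemma sum_natCast_mul_sub_one_mul_bp :
    ∑ k ∈ range (m + 1), (k : ℝ) * (k - 1) * bp m k x = m * (m - 1) * x ^ 2 := by
  have h_cast (k : ℕ) : ((k * (k - 1) : ℕ) : ℝ) = k * (k - 1) := by
    rcases k with _ | k
    · simp
    · push_cast [Nat.add_sub_cancel]
      ring
  simpa [Polynomial.eval_finsetSum, ← bp_eq_eval_bernsteinPolynomial, ← Nat.cast_mul, h_cast]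
    using
    congrArg (Polynomial.eval x) (bernsteinPolynomial.sum_mul_smul ℝ m)

lemma sum_bp_mul_quadratic (a b c : ℝ) :
    ∑ k ∈ range (m + 1), bp m k x * (a * ((k : ℝ) * (k - 1)) + b * k + c)
      = a * (m * (m - 1) * x ^ 2) + b * (m * x) + c := by
  calc _ = a * ∑ k ∈ range (m + 1), (k : ℝ) * (k - 1) * bp m k x
          + b * ∑ k ∈ range (m + 1), (k : ℝ) * bp m k x + c * ∑ k ∈ range (m + 1), bp m k x := by
        simp only [mul_sum, ← sum_add_distrib]
        exact sum_congr rfl fun k _ => by ring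
    _ = _ := by rw [sum_natCast_mul_sub_one_mul_bp, sum_natCast_mul_bp, sum_bp, mul_one]

end BernsteinMoments

lemma bp_eq_zero_of_lt {m k : ℕ} (h : m < k) (x : ℝ) : bp m k x = 0 := by
  simp [bp, Nat.choose_eq_zero_of_lt h]

lemma sum_range_bpz_sub_mul (m d N : ℕ) (h : m + d < N) (x : ℝ) (g : ℕ → ℝ) :
    ∑ k ∈ range N, bpz m ((k : ℤ) - d) x * g k = ∑ j ∈ range (m + 1), bp m j x * g (j + d) := by
  obtain ⟨N, rfl⟩ : ∃ N', N = d + N' := ⟨N - d, by omega⟩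
  have h_low : ∑ k ∈ range d, bpz m ((k : ℤ) - d) x * g k = 0 :=
    sum_eq_zero fun k hk => by
      rw [bpz, if_neg (by have := mem_range.1 hk; omega), zero_mul]
  rw [sum_range_add, h_low, zero_add]
  calc _ = ∑ j ∈ range N, bp m j x * g (j + d) :=
        sum_congr rfl fun j _ => by simp [bpz, add_comm j d]
    _ = _ := by
        refine (sum_subset (range_subset_range.2 (by omega)) fun j hjN hjm => ?_).symm
        rw [bp_eq_zero_of_lt (by simp at hjN hjm; omega), zero_mul]

lemma bernM2_eq_sum_bp (m : ℕ) (f : ℝ → ℝ) (x : ℝ) :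
    BernM2 (m + 2) f x = ∑ j ∈ range (m + 1), bp m j x *
      (((m + 2 : ℕ) / 2 * x ^ 2 + (-1 - (m + 2 : ℕ) / 2) * x + 1) * f (j / (m + 2 : ℕ))
        + (m + 2 : ℕ) * x * (1 - x) * f ((j + 1 : ℕ) / (m + 2 : ℕ))
        + ((m + 2 : ℕ) / 2 * x ^ 2 + (-(m + 2 : ℕ) / 2 + 1) * x)
          * f ((j + 2 : ℕ) / (m + 2 : ℕ))) := by
  set n : ℝ := ((m + 2 : ℕ) : ℝ)
  have h_split : BernM2 (m + 2) f x
      = ∑ k ∈ range (m + 3), bpz m ((k : ℤ) - (0 : ℕ)) x *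
            ((n / 2 * x ^ 2 + (-1 - n / 2) * x + 1) * f (k / n))
        + ∑ k ∈ range (m + 3), bpz m ((k : ℤ) - (1 : ℕ)) x * (n * x * (1 - x) * f (k / n))
        + ∑ k ∈ range (m + 3), bpz m ((k : ℤ) - (2 : ℕ)) x *
            ((n / 2 * x ^ 2 + (-n / 2 + 1) * x) * f (k / n)) := by
    simp only [BernM2, bpM2, ← sum_add_distrib]
    refine sum_congr rfl fun k _ => ?_
    rw [show bpz m ((k : ℤ) - (0 : ℕ)) x = bp m k x by simp [bpz]]
    simp only [n, Nat.cast_one, Nat.cast_ofNat, Nat.add_sub_cancel]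
    ring
  rw [h_split, sum_range_bpz_sub_mul m 0 _ (by omega), sum_range_bpz_sub_mul m 1 _ (by omega),
    sum_range_bpz_sub_mul m 2 _ (by omega), ← sum_add_distrib, ← sum_add_distrib]
  refine sum_congr rfl fun j _ => ?_
  simp only [add_zero]
  ring

section Moments

variable (m : ℕ) (x : ℝ)

lemma bernM2_one : BernM2 (m + 2) (fun _ => 1) x = 1 := by
  rw [bernM2_eq_sum_bp]
  calc _ = ∑ j ∈ range (m + 1), bp m j x := sum_congr rfl fun j _ => by ring
    _ = 1 := sum_bp m x

lemma bernM2_id : BernM2 (m + 2) (fun t => t) x = x := by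
  have hn : (m : ℝ) + 2 ≠ 0 := by positivity
  rw [bernM2_eq_sum_bp]
  calc _ = ∑ j ∈ range (m + 1), bp m j x *
          (0 * ((j : ℝ) * (j - 1)) + 1 / (m + 2) * j + 2 * x / (m + 2)) :=
        sum_congr rfl fun j _ => by push_cast; field_simp; ring
    _ = x := by rw [sum_bp_mul_quadratic]; field_simp; ring

lemma bernM2_sq :
    BernM2 (m + 2) (fun t => t ^ 2) x = x ^ 2 + 2 * x * (1 - x) / ((m + 2 : ℕ) : ℝ) ^ 2 := by
  have hn : (m : ℝ) + 2 ≠ 0 := by positivity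
  rw [bernM2_eq_sum_bp]
  calc _ = ∑ j ∈ range (m + 1), bp m j x *
          (1 / (m + 2) ^ 2 * ((j : ℝ) * (j - 1)) + (1 + 4 * x) / (m + 2) ^ 2 * j
            + ((m + 2) * x ^ 2 - (m + 2) * x + 4 * x) / (m + 2) ^ 2) :=
        sum_congr rfl fun j _ => by push_cast; field_simp; ring
    _ = _ := by rw [sum_bp_mul_quadratic]; push_cast; field_simp; ring

end Moments

theorem stmt5_general (n : ℕ) (hn : 2 ≤ n) (x : ℝ) :
    BernM2 n (fun _ => 1) x = 1 ∧
    BernM2 n (fun t => t) x = x ∧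
    BernM2 n (fun t => t ^ 2) x = x ^ 2 + 2 * x * (1 - x) / (n : ℝ) ^ 2 := by
  obtain ⟨m, rfl⟩ : ∃ m, n = m + 2 := ⟨n - 2, by omega⟩
  exact ⟨bernM2_one m x, bernM2_id m x, bernM2_sq m x⟩

/-- moments of the operator `B_n^{M,2}`. -/
theorem stmt5 (n : ℕ) (hn : 2 ≤ n) (x : ℝ) (hx : x ∈ Icc (0:ℝ) 1) :
    BernM2 n (fun _ => 1) x = 1 ∧
    BernM2 n (fun t => t) x = x ∧
    BernM2 n (fun t => t ^ 2) x = x ^ 2 + 2 * x * (1 - x) / (n : ℝ) ^ 2 :=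
  stmt5_general n hn x
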